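/- For r = 1, p ≥ 1 and n ≥ 1, the minimum degree of IΓ_n^{(p,1)} equals ⌈n/(2p+1)⌉. -/

import Mathlib

/-- Hamming distance between two binary words (as lists). -/
def hdist (u v : List Bool) : ℕ := (List.zipWith bne u v).count true

/-- `w` is an I-Fibonacci (p,r)-code: no factor `1^(r+1)` and no factor `1 0^s 1` with `s < p`
(equivalently: maximal blocks of 1s have length ≤ r and blocks of 1s are separated by ≥ p zeros). -/
def ICode (p r : ℕ) (w : List Bool) : Prop :=
  ¬ (List.replicate (r + 1) true <:+: w) ∧
  ∀ s < p, ¬ ((true :: (List.replicate s false ++ [true])) <:+: w)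

/-- `w` is an O-Fibonacci (p,r)-code: no factor `(10^(p-1))^r 1` and no factor `1 0^s 1`
with `s ≤ p - 2`. -/
def OCode (p r : ℕ) (w : List Bool) : Prop :=
  ¬ (((List.replicate r (true :: List.replicate (p - 1) false)).flatten ++ [true]) <:+: w) ∧
  ∀ s, s + 2 ≤ p → ¬ ((true :: (List.replicate s false ++ [true])) <:+: w)

/-- Vertex type of the I-Fibonacci (p,r)-cube of dimension n. -/
def IVert (p r n : ℕ) := {w : List Bool // w.length = n ∧ ICode p r w}

/-- Vertex type of the O-Fibonacci (p,r)-cube of dimension n. -/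
def OVert (p r n : ℕ) := {w : List Bool // w.length = n ∧ OCode p r w}

/-- The I-Fibonacci (p,r)-cube: vertices adjacent iff they differ in exactly one coordinate. -/
def IGraph (p r n : ℕ) : SimpleGraph (IVert p r n) :=
  SimpleGraph.fromRel (fun u v => hdist u.1 v.1 = 1)

/-- The O-Fibonacci (p,r)-cube. -/
def OGraph (p r n : ℕ) : SimpleGraph (OVert p r n) :=
  SimpleGraph.fromRel (fun u v => hdist u.1 v.1 = 1)

/-- Eccentricity of a vertex. -/
noncomputable def ecc {V : Type*} (G : SimpleGraph V) (v : V) : ℕ :=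
  sSup {d | ∃ u, G.dist v u = d}

/-- Radius of a graph. -/
noncomputable def grad {V : Type*} (G : SimpleGraph V) : ℕ :=
  sInf {e | ∃ v, ecc G v = e}

/-- Diameter of a graph. -/
noncomputable def gdiam {V : Type*} (G : SimpleGraph V) : ℕ :=
  sSup {d | ∃ u v, G.dist u v = d}

/-- Degree of a vertex (number of neighbours). -/
noncomputable def deg {V : Type*} (G : SimpleGraph V) (v : V) : ℕ :=
  {u | G.Adj v u}.ncard

/-!
For `p ≥ 1` a vertex of `IΓ_n^{(p,1)}` is a word of length `n` whose `1`s are pairwise more than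
`p` apart, and its neighbours are the words obtained by flipping one letter. Every `1` can be
flipped, and a `0` can be flipped exactly when it is farther than `p` from every `1`; so the degree
is the number of `1`s plus the number of such isolated positions. Each `1` is within distance `p`
of at most `2p + 1` positions, hence `n ≤ (2p + 1) · deg`. The bound is attained by
the word whose `1`s form one residue class modulo `2p + 1`, chosen so that the class also comes
within `p` of the last position: it has `⌈n / (2p + 1)⌉` ones and no isolated position.
-/

lemma hdist_cons (a b : Bool) (u v : List Bool) :
    hdist (a :: u) (b :: v) = hdist u v + if a = b then 0 else 1 := by
  cases a <;> cases b <;> simp [hdist]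

lemma hdist_comm (u v : List Bool) : hdist u v = hdist v u := by
  simp only [hdist, List.zipWith_comm (as := u), bne_comm]

lemma hdist_eq_zero_iff {u v : List Bool} (h : u.length = v.length) : hdist u v = 0 ↔ u = v := by
  induction u generalizing v with
  | nil => cases v <;> simp_all [hdist]
  | cons a u ih =>
    cases v with
    | nil => simp at h
    | cons b v =>
      rw [hdist_cons, List.cons.injEq, ← ih (by simpa using h)]
      split_ifs <;> simp_all

lemma hdist_modify_not {w : List Bool} {i : ℕ} (hi : i < w.length) :
    hdist w (w.modify i not) = 1 := by
  induction w generalizing i with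
  | nil => simp at hi
  | cons a u ih =>
    cases i with
    | zero => simp [List.modify_zero_cons, hdist_cons, (hdist_eq_zero_iff rfl).2]
    | succ i => simp [List.modify_succ_cons, hdist_cons, ih (by simpa using hi)]

lemma exists_eq_modify_not_of_hdist_eq_one {u v : List Bool} (hl : u.length = v.length)
    (h : hdist u v = 1) : ∃ i < u.length, v = u.modify i not := by
  induction u generalizing v with
  | nil => simp_all [hdist]
  | cons a u ih =>
    cases v with
    | nil => simp at hl
    | cons b v =>
      rw [hdist_cons] at h
      by_cases hab : a = b
      · obtain ⟨i, hi, rfl⟩ := ih (by simpa using hl) (by simpa [hab] using h)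
        exact ⟨i + 1, by simpa using hi, by simp [List.modify_succ_cons, hab]⟩
      · have huv : u = v := (hdist_eq_zero_iff (by simpa using hl)).1 (by simpa [hab] using h)
        refine ⟨0, by simp, ?_⟩
        cases a <;> cases b <;> simp_all [List.modify_zero_cons]

lemma getElem?_modify_not_self {w : List Bool} {i : ℕ} :
    (w.modify i not)[i]? = w[i]?.map not := by
  simp

lemma getElem?_modify_not_of_ne {w : List Bool} {i j : ℕ} (h : i ≠ j) :
    (w.modify i not)[j]? = w[j]? := by
  simp [h]

lemma modify_not_ne {w : List Bool} {i : ℕ} (hi : i < w.length) : w.modify i not ≠ w := by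
  intro h
  have := congrArg (·[i]?) h
  simp only [getElem?_modify_not_self, List.getElem?_eq_getElem hi, Option.map_some] at this
  cases w[i] <;> simp at this

lemma injOn_modify_not (w : List Bool) :
    Set.InjOn (w.modify · not) {i | i < w.length} := by
  intro i hi j _ hij
  by_contra hne
  have := congrArg (·[i]?) hij
  simp only [getElem?_modify_not_self, getElem?_modify_not_of_ne (Ne.symm hne)] at this
  rw [List.getElem?_eq_getElem hi] at this
  cases w[i] <;> simp at this

lemma IGraph_adj_iff {p r n : ℕ} {v u : IVert p r n} :
    (IGraph p r n).Adj v u ↔ ∃ i < n, u.1 = v.1.modify i not := by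
  simp only [IGraph, SimpleGraph.fromRel_adj]
  rw [hdist_comm u.1, or_self]
  constructor
  · rintro ⟨-, h⟩
    obtain ⟨i, hi, hu⟩ := exists_eq_modify_not_of_hdist_eq_one (v.2.1.trans u.2.1.symm) h
    exact ⟨i, hi.trans_eq v.2.1, hu⟩
  · rintro ⟨i, hi, hu⟩
    have hi' : i < v.1.length := hi.trans_eq v.2.1.symm
    exact ⟨fun h => modify_not_ne hi' (hu ▸ congrArg Subtype.val h).symm,
      hu ▸ hdist_modify_not hi'⟩

lemma deg_IGraph {p r n : ℕ} (v : IVert p r n) :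
    deg (IGraph p r n) v = {i | i < n ∧ ICode p r (v.1.modify i not)}.ncard := by
  have hlen : ∀ i, (v.1.modify i not).length = n := fun i => by rw [List.length_modify, v.2.1]
  refine (Set.ncard_congr (fun i hi => (⟨_, hlen i, hi.2⟩ : IVert p r n)) ?_ ?_ ?_).symm
  · exact fun i hi => IGraph_adj_iff.2 ⟨i, hi.1, rfl⟩
  · exact fun i j hi hj hij => injOn_modify_not v.1 (hi.1.trans_eq v.2.1.symm)
      (hj.1.trans_eq v.2.1.symm) (congrArg Subtype.val hij)
  · intro u hu
    obtain ⟨i, hi, hu⟩ := IGraph_adj_iff.1 hu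
    exact ⟨i, ⟨hi, hu ▸ u.2.2⟩, Subtype.ext hu.symm⟩

def Separated (p : ℕ) (w : List Bool) : Prop :=
  ∀ ⦃i j⦄, w[i]? = some true → w[j]? = some true → i < j → i + p < j

def gapFactor (s : ℕ) : List Bool := true :: (List.replicate s false ++ [true])

lemma length_gapFactor (s : ℕ) : (gapFactor s).length = s + 2 := by simp [gapFactor]

lemma getElem_gapFactor {s i : ℕ} (hi : i < (gapFactor s).length) :
    (gapFactor s)[i] = decide (i = 0 ∨ i = s + 1) := by
  rw [length_gapFactor] at hi
  rcases i with _ | i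
  · rfl
  · simp only [gapFactor, List.getElem_cons_succ, List.getElem_append, List.length_replicate]
    split_ifs <;> simp <;> omega

lemma gapFactor_infix_iff {s : ℕ} {w : List Bool} :
    gapFactor s <:+: w ↔
      ∃ k, w[k]? = some true ∧ w[k + s + 1]? = some true ∧
        ∀ i, 0 < i → i ≤ s → w[k + i]? = some false := by
  simp only [List.infix_iff_getElem?, length_gapFactor, getElem_gapFactor]
  constructor
  · rintro ⟨k, -, h⟩
    have hlast := h (s + 1) (by omega)
    rw [show s + 1 + k = k + s + 1 by omega] at hlast
    refine ⟨k, by simpa using h 0 (by omega), by simpa using hlast, fun i hi0 his => ?_⟩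
    simpa [add_comm, show i ≠ 0 by omega, show i ≠ s + 1 by omega] using h i (by omega)
  · rintro ⟨k, hk, hks, hmid⟩
    have hlen : k + s + 1 < w.length := (List.getElem?_eq_some_iff.1 hks).1
    refine ⟨k, by omega, fun i hi => ?_⟩
    rcases Nat.eq_zero_or_pos i with rfl | hi0
    · simpa using hk
    · by_cases his : i = s + 1
      · subst his; simpa [add_comm, ← add_assoc] using hks
      · simpa [add_comm, his, show i ≠ 0 by omega] using hmid i hi0 (by omega)

lemma icode_one_iff_separated {p : ℕ} (hp : 1 ≤ p) {w : List Bool} :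
    ICode p 1 w ↔ Separated p w := by
  constructor
  · rintro ⟨-, hgap⟩ i j hi hj hij
    by_contra! hji
    classical
    -- the first `1` after position `i` closes a forbidden gap
    have hex : ∃ d, 0 < d ∧ w[i + d]? = some true :=
      ⟨j - i, by omega, by rwa [Nat.add_sub_cancel' hij.le]⟩
    obtain ⟨hd0, hd⟩ := Nat.find_spec hex
    have hdj : Nat.find hex ≤ j - i :=
      Nat.find_min' hex ⟨by omega, by rwa [Nat.add_sub_cancel' hij.le]⟩
    have hlen : i + Nat.find hex < w.length := (List.getElem?_eq_some_iff.1 hd).1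
    refine hgap (Nat.find hex - 1) (by omega)
      (gapFactor_infix_iff.2 ⟨i, hi, ?_, fun e he0 hed => ?_⟩)
    · rwa [show i + (Nat.find hex - 1) + 1 = i + Nat.find hex by omega]
    · have hmin := Nat.find_min hex (show e < Nat.find hex by omega)
      rw [List.getElem?_eq_getElem (by omega)] at hmin ⊢
      simpa [he0] using hmin
  · intro hsep
    have hfree : ∀ s < p, ¬ gapFactor s <:+: w := by
      intro s hs hinf
      obtain ⟨k, hk, hks, -⟩ := gapFactor_infix_iff.1 hinf
      have := hsep hk hks (by omega)
      omega
    exact ⟨hfree 0 hp, hfree⟩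

lemma getElem?_modify_not_eq_some_true {w : List Bool} {i j : ℕ} :
    (w.modify i not)[j]? = some true ↔
      (j = i ∧ w[j]? = some false) ∨ (j ≠ i ∧ w[j]? = some true) := by
  by_cases h : j = i
  · subst h
    simp
  · simp [getElem?_modify_not_of_ne (Ne.symm h), h]

def ones (w : List Bool) : Finset ℕ :=
  (Finset.range w.length).filter fun i => w[i]? = some true

lemma mem_ones {w : List Bool} {i : ℕ} : i ∈ ones w ↔ w[i]? = some true := by
  simp only [ones, Finset.mem_filter, Finset.mem_range, and_iff_right_iff_imp]
  exact fun h => (List.getElem?_eq_some_iff.1 h).1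

def isolatedPositions (p : ℕ) (w : List Bool) : Finset ℕ :=
  (Finset.range w.length).filter fun i => ∀ j ∈ ones w, i + p < j ∨ j + p < i

lemma separated_modify_not_iff {p : ℕ} {w : List Bool} (hw : Separated p w) {i : ℕ}
    (hi : i < w.length) :
    Separated p (w.modify i not) ↔
      i ∈ ones w ∨ i ∈ isolatedPositions p w := by
  simp only [Separated, getElem?_modify_not_eq_some_true, isolatedPositions, Finset.mem_filter,
    Finset.mem_range, mem_ones, hi, true_and]
  rcases hb : w[i] with _ | _
  · have hwi : w[i]? = some false := by rw [List.getElem?_eq_getElem hi, hb]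
    simp only [hwi, Option.some.injEq, Bool.false_eq_true, false_or]
    constructor
    · intro h j hj
      have hji : j ≠ i := by rintro rfl; simp [hwi] at hj
      rcases lt_or_gt_of_ne hji with hlt | hlt
      · exact Or.inr (h (Or.inr ⟨hji, hj⟩) (Or.inl ⟨rfl, hwi⟩) hlt)
      · exact Or.inl (h (Or.inl ⟨rfl, hwi⟩) (Or.inr ⟨hji, hj⟩) hlt)
    · rintro hfar a b (⟨rfl, -⟩ | ⟨-, ha⟩) (⟨rfl, -⟩ | ⟨-, hb'⟩) hab
      · omega
      · have := hfar b hb'; omega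
      · have := hfar a ha; omega
      · exact hw ha hb' hab
  · have hwi : w[i]? = some true := by rw [List.getElem?_eq_getElem hi, hb]
    have hones : ∀ j, (j = i ∧ w[j]? = some false) ∨ (j ≠ i ∧ w[j]? = some true) →
        w[j]? = some true := by
      rintro j (⟨rfl, h⟩ | ⟨-, h⟩)
      · simp [hwi] at h
      · exact h
    simp only [hwi, true_or, iff_true]
    exact fun a b ha hb hab => hw (hones a ha) (hones b hb) hab

lemma disjoint_ones_isolatedPositions (p : ℕ) (w : List Bool) :
    Disjoint (ones w) (isolatedPositions p w) := by
  refine Finset.disjoint_left.2 fun i hi hiso => ?_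
  have := (Finset.mem_filter.1 hiso).2 i hi
  omega

lemma deg_IGraph_one {p n : ℕ} (hp : 1 ≤ p) (v : IVert p 1 n) :
    deg (IGraph p 1 n) v = (ones v.1).card + (isolatedPositions p v.1).card := by
  have hsep := (icode_one_iff_separated hp).1 v.2.2
  have hset : {i | i < n ∧ ICode p 1 (v.1.modify i not)} =
      ↑(ones v.1 ∪ isolatedPositions p v.1) := by
    ext i
    rw [Set.mem_ofPred_eq, Finset.coe_union, Set.mem_union, Finset.mem_coe, Finset.mem_coe]
    constructor
    · rintro ⟨hi, hcode⟩
      exact (separated_modify_not_iff hsep (hi.trans_eq v.2.1.symm)).1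
        ((icode_one_iff_separated hp).1 hcode)
    · intro h
      have hi : i < v.1.length := by
        rcases h with h | h <;> exact Finset.mem_range.1 (Finset.mem_filter.1 h).1
      exact ⟨hi.trans_eq v.2.1,
        (icode_one_iff_separated hp).2 ((separated_modify_not_iff hsep hi).2 h)⟩
  rw [deg_IGraph, hset, Set.ncard_coe_finset,
    Finset.card_union_of_disjoint (disjoint_ones_isolatedPositions p v.1)]

lemma length_le_card_isolatedPositions_add (p : ℕ) (w : List Bool) :
    w.length ≤ (isolatedPositions p w).card + (ones w).card * (2 * p + 1) := by
  have hcover : Finset.range w.length ⊆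
      isolatedPositions p w ∪ (ones w).biUnion fun j => Finset.Icc (j - p) (j + p) := by
    intro i hi
    by_cases hfar : ∀ j ∈ ones w, i + p < j ∨ j + p < i
    · exact Finset.mem_union_left _ (Finset.mem_filter.2 ⟨hi, hfar⟩)
    · push Not at hfar
      obtain ⟨j, hj, h1, h2⟩ := hfar
      exact Finset.mem_union_right _
        (Finset.mem_biUnion.2 ⟨j, hj, Finset.mem_Icc.2 ⟨by omega, by omega⟩⟩)
  calc w.length = (Finset.range w.length).card := (Finset.card_range _).symm
    _ ≤ _ := Finset.card_le_card hcover
    _ ≤ _ := Finset.card_union_le _ _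
    _ ≤ _ := Nat.add_le_add_left (Finset.card_biUnion_le_card_mul _ _ _ fun j _ => by
        rw [Nat.card_Icc]; omega) _

lemma div_le_deg_IGraph_one {p n : ℕ} (hp : 1 ≤ p) (v : IVert p 1 n) :
    (n + 2 * p) / (2 * p + 1) ≤ deg (IGraph p 1 n) v := by
  have hlen := length_le_card_isolatedPositions_add p v.1
  rw [v.2.1] at hlen
  rw [Nat.div_le_iff_le_mul_add_pred (by omega), deg_IGraph_one hp, Nat.add_sub_cancel]
  nlinarith

def residueWord (q t n : ℕ) : List Bool := List.ofFn fun i : Fin n => decide (i.1 % q = t)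

lemma length_residueWord {q t n : ℕ} : (residueWord q t n).length = n := List.length_ofFn

lemma getElem?_residueWord_eq_some_true {q t n i : ℕ} :
    (residueWord q t n)[i]? = some true ↔ i < n ∧ i % q = t := by
  simp [residueWord, List.getElem?_ofFn]

lemma separated_residueWord {p q t n : ℕ} (hpq : p < q) : Separated p (residueWord q t n) := by
  intro i j hi hj hij
  rw [getElem?_residueWord_eq_some_true] at hi hj
  have hdvd : q ∣ j - i :=
    Nat.dvd_of_mod_eq_zero (Nat.sub_mod_eq_zero_of_mod_eq (hj.2.trans hi.2.symm))
  have := Nat.le_of_dvd (by omega) hdvd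
  omega

lemma card_ones_residueWord {q t n : ℕ} (hq : 0 < q) :
    (ones (residueWord q t n)).card ≤ (n + q - 1) / q := by
  have hmaps : Set.MapsTo (· / q) (ones (residueWord q t n)) (Finset.range ((n + q - 1) / q)) := by
    intro i hi
    rw [Finset.mem_coe, mem_ones, getElem?_residueWord_eq_some_true] at hi
    simp only [Finset.mem_coe, Finset.mem_range]
    rw [Nat.lt_iff_add_one_le, Nat.le_div_iff_mul_le hq, Nat.add_one_mul]
    have := Nat.div_mul_le_self i q
    omega
  have hinj : Set.InjOn (· / q) (ones (residueWord q t n)) := by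
    intro i hi j hj hij
    rw [Finset.mem_coe, mem_ones, getElem?_residueWord_eq_some_true] at hi hj
    rw [← Nat.div_add_mod i q, ← Nat.div_add_mod j q, hi.2, hj.2]
    exact congrArg (q * · + t) hij
  simpa using Finset.card_le_card_of_injOn _ hmaps hinj

/-- The residue `min p ((n - 1) % (2 * p + 1))` is chosen so that its class also comes within `p`
of the last position `n - 1`. -/
lemma exists_mod_eq_near {p n i : ℕ} (hi : i < n) :
    ∃ j < n, j % (2 * p + 1) = min p ((n - 1) % (2 * p + 1)) ∧ j ≤ i + p ∧ i ≤ j + p := by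
  set q := 2 * p + 1
  set t := min p ((n - 1) % q)
  have hn := Nat.div_add_mod (n - 1) q
  have hi' := Nat.div_add_mod i q
  have hm := Nat.mod_lt (n - 1) (show 0 < q by omega)
  have hr := Nat.mod_lt i (show 0 < q by omega)
  have hac : i / q ≤ (n - 1) / q := Nat.div_le_div_right (by omega)
  have hblock : i / q < (n - 1) / q → q * (i / q) + q ≤ q * ((n - 1) / q) := fun h => by
    simpa [Nat.mul_add] using Nat.mul_le_mul_left q h
  have heq : i / q = (n - 1) / q → q * (i / q) = q * ((n - 1) / q) := congrArg (q * ·)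
  have htq : t < q := by omega
  by_cases hclose : i % q ≤ t + p
  · refine ⟨q * (i / q) + t, ?_, ?_, by omega, by omega⟩
    · rcases hac.lt_or_eq with h | h
      · have := hblock h; omega
      · have := heq h; omega
    · rw [Nat.mul_comm, Nat.mul_add_mod_of_lt htq]
  · refine ⟨q * (i / q) + q + t, ?_, ?_, by omega, by omega⟩
    · rcases hac.lt_or_eq with h | h
      · have := hblock h; omega
      · have := heq h; omega
    · rw [show q * (i / q) + q + t = q * (i / q + 1) + t by ring, Nat.mul_comm,
        Nat.mul_add_mod_of_lt htq]

lemma isolatedPositions_residueWord {p n : ℕ} :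
    isolatedPositions p (residueWord (2 * p + 1) (min p ((n - 1) % (2 * p + 1))) n) = ∅ := by
  refine Finset.eq_empty_of_forall_notMem fun i hi => ?_
  rw [isolatedPositions, Finset.mem_filter, Finset.mem_range, length_residueWord] at hi
  obtain ⟨j, hjn, hj, h1, h2⟩ := exists_mod_eq_near (p := p) hi.1
  have := hi.2 j (mem_ones.2 (getElem?_residueWord_eq_some_true.2 ⟨hjn, hj⟩))
  omega

theorem IGraph_min_degree_r_one_general (p n : ℕ) (hp : 1 ≤ p) :
    (∀ v : IVert p 1 n, (n + 2 * p) / (2 * p + 1) ≤ deg (IGraph p 1 n) v) ∧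
    (∃ v : IVert p 1 n, deg (IGraph p 1 n) v = (n + 2 * p) / (2 * p + 1)) := by
  refine ⟨div_le_deg_IGraph_one hp, ?_⟩
  let w := residueWord (2 * p + 1) (min p ((n - 1) % (2 * p + 1))) n
  have hw : ICode p 1 w := (icode_one_iff_separated hp).2 (separated_residueWord (by omega))
  let v : IVert p 1 n := ⟨w, length_residueWord, hw⟩
  refine ⟨v, le_antisymm ?_ (div_le_deg_IGraph_one hp v)⟩
  rw [deg_IGraph_one hp, isolatedPositions_residueWord, Finset.card_empty, Nat.add_zero]
  simpa using card_ones_residueWord (q := 2 * p + 1) (t := min p ((n - 1) % (2 * p + 1)))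
    (n := n) (by omega)

/-- `δ(IΓ_n^{(p,1)}) = ⌈n/(2p+1)⌉`. -/
theorem IGraph_min_degree_r_one (p n : ℕ) (hp : 1 ≤ p) (hn : 1 ≤ n) :
    (∀ v : IVert p 1 n, (n + 2 * p) / (2 * p + 1) ≤ deg (IGraph p 1 n) v) ∧
    (∃ v : IVert p 1 n, deg (IGraph p 1 n) v = (n + 2 * p) / (2 * p + 1)) :=
  IGraph_min_degree_r_one_general p n hp
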